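/- Let α ∈ (0,1], let f : [0,T] → ℝ be α-Hölder continuous, and let Z ⊆ [0,T] be a closed set whose α-dimensional Hausdorff measure is zero. If f is locally constant on [0,T] ∖ Z (i.e., f is constant on each connected component of the complement of Z), then f is constant on [0,T]. -/

import Mathlib

/-!
An `α`-Hölder map sends `μH[α]`-null sets to `μH[1]`-null sets, so `f(Z)` is Lebesgue-null.
Every value of `f` on `[0, T]` is `f 0` or a value on `Z`: if `c` is the last point of
`Z ∩ [0, x]` (or `0` if there is none), `f` is constant on `(c, x]`, so `f x = f c` by
continuity. Hence `f([0, T])` is a null interval, i.e. a point.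
-/

open Set MeasureTheory
open scoped NNReal ENNReal

theorem HolderOnWith.of_dist_le {X Y : Type*} [PseudoMetricSpace X] [PseudoMetricSpace Y]
    {C r : ℝ≥0} {f : X → Y} {s : Set X}
    (h : ∀ x ∈ s, ∀ y ∈ s, dist (f x) (f y) ≤ C * dist x y ^ (r : ℝ)) :
    HolderOnWith C r f s := by
  intro x hx y hy
  rw [edist_dist, edist_dist, ← ENNReal.ofReal_coe_nnreal,
    ENNReal.ofReal_rpow_of_nonneg dist_nonneg r.coe_nonneg, ← ENNReal.ofReal_mul C.coe_nonneg]
  exact ENNReal.ofReal_le_ofReal (h x hx y hy)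

theorem HolderOnWith.volume_image_eq_zero {X : Type*} [EMetricSpace X] [MeasurableSpace X]
    [BorelSpace X] {C r : ℝ≥0} {f : X → ℝ} {s : Set X} (hf : HolderOnWith C r f s)
    (hr : 0 < r) (hs : μH[r] s = 0) : volume (f '' s) = 0 := by
  rw [← hausdorffMeasure_real]
  simpa [hs] using hf.hausdorffMeasure_image_le hr zero_le_one

theorem Set.OrdConnected.subsingleton_of_volume_eq_zero {s : Set ℝ} (hs : s.OrdConnected)
    (h : volume s = 0) : s.Subsingleton := by
  intro x hx y hy
  have : volume (uIcc x y) = 0 := measure_mono_null (hs.uIcc_subset hx hy) h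
  rw [Real.volume_interval, ENNReal.ofReal_eq_zero, abs_nonpos_iff, sub_eq_zero] at this
  exact this.symm

section

variable {α : Type*} [ConditionallyCompleteLinearOrder α] [TopologicalSpace α] [OrderTopology α]

theorem IsClosed.exists_mem_Icc_disjoint_Ioc {Z : Set α} (hZ : IsClosed Z) {a x : α}
    (hax : a ≤ x) : ∃ c ∈ Icc a x, (c = a ∨ c ∈ Z) ∧ Disjoint (Ioc c x) Z := by
  set A := {a} ∪ Z ∩ Icc a x
  have hA_closed : IsClosed A := isClosed_singleton.union (hZ.inter isClosed_Icc)
  have hA_sub : A ⊆ Icc a x :=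
    union_subset (singleton_subset_iff.2 ⟨le_rfl, hax⟩) inter_subset_right
  obtain ⟨c, hcA, hc_max⟩ :=
    (isCompact_Icc.of_isClosed_subset hA_closed hA_sub).exists_isGreatest ⟨a, Or.inl rfl⟩
  refine ⟨c, hA_sub hcA, hcA.imp id (·.1), disjoint_left.2 fun z hz hzZ => ?_⟩
  have : z ≤ c := hc_max (Or.inr ⟨hzZ, (hA_sub hcA).1.trans hz.1.le, hz.2⟩)
  exact this.not_gt hz.1

variable [DenselyOrdered α] {Y : Type*} [TopologicalSpace Y] [T2Space Y]

theorem image_Icc_subset_insert_image_of_isClosed {f : α → Y} {a b : α} {Z : Set α}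
    (hZ : IsClosed Z) (hf : ContinuousOn f (Icc a b))
    (hloc : ∀ u ∈ Icc a b, ∀ v ∈ Icc a b, u ≤ v → Icc u v ∩ Z = ∅ → f u = f v) :
    f '' Icc a b ⊆ insert (f a) (f '' (Z ∩ Icc a b)) := by
  rintro _ ⟨x, hx, rfl⟩
  obtain ⟨c, hc, hcaZ, hdisj⟩ := hZ.exists_mem_Icc_disjoint_Ioc hx.1
  have hcx_sub : Icc c x ⊆ Icc a b := Icc_subset_Icc hc.1 hx.2
  have hfc : f c = f x := by
    rcases hc.2.eq_or_lt with rfl | hcx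
    · rfl
    have hconst : EqOn f (fun _ => f x) (Ioc c x) := fun y hy =>
      hloc y (hcx_sub (Ioc_subset_Icc_self hy)) x hx hy.2 <|
        disjoint_iff_inter_eq_empty.1 (hdisj.mono_left (Icc_subset_Ioc hy.1 le_rfl))
    have hconst_closure : EqOn f (fun _ => f x) (Icc c x) :=
      hconst.of_subset_closure (hf.mono hcx_sub) continuousOn_const Ioc_subset_Icc_self
        (closure_Ioc hcx.ne).ge
    exact hconst_closure (left_mem_Icc.2 hcx.le)
  rcases hcaZ with rfl | hcZ
  · exact Or.inl hfc.symm
  · exact Or.inr ⟨c, ⟨hcZ, hcx_sub ⟨le_rfl, hc.2⟩⟩, hfc⟩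

end

theorem holder_constant_off_null_set_is_constant_general
    (α T : ℝ) (hα : 0 < α)
    (f : ℝ → ℝ) (C : ℝ)
    (hf : ∀ s ∈ Icc (0 : ℝ) T, ∀ t ∈ Icc (0 : ℝ) T, |f t - f s| ≤ C * |t - s| ^ α)
    (Z : Set ℝ) (hZclosed : IsClosed Z)
    (hZnull : μH[α] Z = 0)
    (hloc : ∀ s ∈ Icc (0 : ℝ) T, ∀ t ∈ Icc (0 : ℝ) T,
      s ≤ t → Icc s t ∩ Z = ∅ → f s = f t) :
    ∀ s ∈ Icc (0 : ℝ) T, ∀ t ∈ Icc (0 : ℝ) T, f s = f t := by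
  have hr : 0 < α.toNNReal := Real.toNNReal_pos.2 hα
  have hH : HolderOnWith C.toNNReal α.toNNReal f (Icc 0 T) :=
    HolderOnWith.of_dist_le fun x hx y hy => by
      rw [Real.coe_toNNReal α hα.le, Real.dist_eq, Real.dist_eq]
      exact (hf y hy x hx).trans (by gcongr; exact le_max_left _ _)
  have hcont : ContinuousOn f (Icc 0 T) := hH.continuousOn hr
  have hZ_image_null : volume (f '' (Z ∩ Icc 0 T)) = 0 :=
    (hH.mono inter_subset_right).volume_image_eq_zero hr <|
      measure_mono_null inter_subset_left (by rwa [Real.coe_toNNReal α hα.le])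
  have h_image_null : volume (f '' Icc 0 T) = 0 :=
    measure_mono_null (image_Icc_subset_insert_image_of_isClosed hZclosed hcont hloc)
      (measure_union_null (measure_singleton _) hZ_image_null)
  have h_image_ordConnected : (f '' Icc 0 T).OrdConnected :=
    (isPreconnected_Icc.image f hcont).ordConnected
  intro s hs t ht
  exact h_image_ordConnected.subsingleton_of_volume_eq_zero h_image_null
    (mem_image_of_mem f hs) (mem_image_of_mem f ht)

/-- Let `α ∈ (0,1]`, let `f : [0,T] → ℝ` be `α`-Hölder continuous, and let
`Z ⊆ [0,T]` be a closed set of zero `α`-dimensional Hausdorff measure. If `f` is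
locally constant off `Z` (i.e. constant on every interval avoiding `Z`, hence on
every connected component of `[0,T] ∖ Z`), then `f` is constant on `[0,T]`. -/
theorem holder_constant_off_null_set_is_constant
    (α T : ℝ) (hα : 0 < α) (hα1 : α ≤ 1) (hT : 0 ≤ T)
    (f : ℝ → ℝ) (C : ℝ)
    (hf : ∀ s ∈ Icc (0 : ℝ) T, ∀ t ∈ Icc (0 : ℝ) T, |f t - f s| ≤ C * |t - s| ^ α)
    (Z : Set ℝ) (hZsub : Z ⊆ Icc 0 T) (hZclosed : IsClosed Z)
    (hZnull : μH[α] Z = 0)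
    (hloc : ∀ s ∈ Icc (0 : ℝ) T, ∀ t ∈ Icc (0 : ℝ) T,
      s ≤ t → Icc s t ∩ Z = ∅ → f s = f t) :
    ∀ s ∈ Icc (0 : ℝ) T, ∀ t ∈ Icc (0 : ℝ) T, f s = f t :=
  holder_constant_off_null_set_is_constant_general α T hα f C hf Z hZclosed hZnull hloc
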